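/- arXiv:2403.13288 — 2 statements merged into one kernel-verified Lean document; each statement's English description precedes it below -/
import Mathlib

section
/- If h : ℝⁿ → ℝ is continuously differentiable and along every solution x(t) of the ODE ẋ = F(x) one has d/dt h(x(t)) ≥ -α(h(x(t))) for a locally Lipschitz class-K function α, then the zero-superlevel set C = {x : h(x) ≥ 0} is forward invariant: h(x(0)) ≥ 0 implies h(x(t)) ≥ 0 for all t ≥ 0. -/
/-- CBF forward invariance. If `h` is continuously differentiable and along
the solution `x` of `ẋ = F x` the derivative of `h ∘ x` is bounded below by `-α (h (x t))`
for a locally Lipschitz class-K function `α`, then the zero-superlevel set of `h` is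
forward invariant. -/
theorem cbf_forward_invariance
    {n : ℕ} (h : EuclideanSpace ℝ (Fin n) → ℝ) (hh : ContDiff ℝ 1 h)
    (F : EuclideanSpace ℝ (Fin n) → EuclideanSpace ℝ (Fin n))
    (hF : LocallyLipschitz F)
    (α : ℝ → ℝ) (hα_cont : Continuous α) (hα_mono : StrictMono α)
    (hα_zero : α 0 = 0) (hα_lip : LocallyLipschitz α)
    (x : ℝ → EuclideanSpace ℝ (Fin n))
    (hx : ∀ t : ℝ, HasDerivAt x (F (x t)) t)
    (hineq : ∀ t : ℝ, 0 ≤ t →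
      ∃ y' : ℝ, HasDerivAt (fun s => h (x s)) y' t ∧ y' ≥ -α (h (x t)))
    (h0 : h (x 0) ≥ 0) :
    ∀ t : ℝ, 0 ≤ t → h (x t) ≥ 0 := by
  intro t₁ ht₁
  by_contra hneg
  push_neg at hneg
  set y : ℝ → ℝ := fun s => h (x s) with hy
  have hxc : Continuous x := continuous_iff_continuousAt.mpr fun t => (hx t).continuousAt
  have hyc : Continuous y := hh.continuous.comp hxc
  -- the set of times in [0, t₁] where y is nonnegative
  set S : Set ℝ := Set.Icc 0 t₁ ∩ {s | 0 ≤ y s} with hS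
  have hS_closed : IsClosed S := isClosed_Icc.inter (isClosed_le continuous_const hyc)
  have hS_ne : S.Nonempty := ⟨0, ⟨le_refl 0, ht₁⟩, h0⟩
  have hS_bdd : BddAbove S := ⟨t₁, fun s hs => hs.1.2⟩
  set τ : ℝ := sSup S with hτ
  have hτ_mem : τ ∈ S := hS_closed.csSup_mem hS_ne hS_bdd
  have hτ_nonneg : 0 ≤ τ := hτ_mem.1.1
  have hτ_le : τ ≤ t₁ := hτ_mem.1.2
  have hyτ : 0 ≤ y τ := hτ_mem.2
  have hτ_lt : τ < t₁ := lt_of_le_of_ne hτ_le fun he => absurd hyτ (not_le.mpr (he ▸ hneg))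
  -- on (τ, t₁], y is negative
  have hyneg : ∀ s, τ < s → s ≤ t₁ → y s < 0 := by
    intro s hs₁ hs₂
    by_contra hc
    push_neg at hc
    exact absurd (le_csSup hS_bdd ⟨⟨hτ_nonneg.trans hs₁.le, hs₂⟩, hc⟩) (not_le.mpr hs₁)
  -- deriv of y is positive on the interior of [τ, t₁]
  have hmono : StrictMonoOn y (Set.Icc τ t₁) := by
    apply strictMonoOn_of_deriv_pos (convex_Icc τ t₁) hyc.continuousOn
    intro s hs
    rw [interior_Icc] at hs
    obtain ⟨y', hd, hge⟩ := hineq s (hτ_nonneg.trans hs.1.le)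
    rw [hd.deriv]
    have : α (y s) < 0 := hα_zero ▸ hα_mono (hyneg s hs.1 hs.2.le)
    linarith
  have := hmono ⟨le_refl τ, hτ_le⟩ ⟨hτ_lt.le, le_refl t₁⟩ hτ_lt
  have : y t₁ < 0 := hneg
  linarith
end

section
/- Let y : [0,∞) → ℝ be differentiable with y'(t) ≥ -α(y(t)) for all t, where α is a locally Lipschitz class-K function extended oddly to ℝ. If y(0) ≥ 0 then y(t) ≥ 0 for all t ≥ 0. -/
/-- scalar comparison lemma. If `y` is differentiable with
`y' t ≥ -α (y t)` for a locally Lipschitz, continuous, strictly increasing odd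
function `α` with `α 0 = 0`, and `y 0 ≥ 0`, then `y t ≥ 0` for all `t ≥ 0`. -/
theorem scalar_comparison_lemma
    (α : ℝ → ℝ) (hα_cont : Continuous α) (hα_mono : StrictMono α)
    (hα_zero : α 0 = 0) (hα_odd : ∀ s : ℝ, α (-s) = -α s)
    (hα_lip : LocallyLipschitz α)
    (y y' : ℝ → ℝ)
    (hy : ∀ t : ℝ, HasDerivAt y (y' t) t)
    (hineq : ∀ t : ℝ, y' t ≥ -α (y t))
    (h0 : y 0 ≥ 0) :
    ∀ t : ℝ, 0 ≤ t → y t ≥ 0 := by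
  intro t₀ ht₀
  by_contra h
  push_neg at h
  have hcont : Continuous y :=
    continuous_iff_continuousAt.mpr fun x => (hy x).continuousAt
  set S : Set ℝ := Set.Icc 0 t₀ ∩ {t | 0 ≤ y t} with hS
  have hSclosed : IsClosed S :=
    isClosed_Icc.inter (isClosed_le continuous_const hcont)
  have h0S : (0:ℝ) ∈ S := ⟨⟨le_refl 0, ht₀⟩, h0⟩
  have hbdd : BddAbove S := ⟨t₀, fun x hx => hx.1.2⟩
  set s := sSup S with hs
  have hsS : s ∈ S := hSclosed.csSup_mem ⟨0, h0S⟩ hbdd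
  have hst₀ : s ≤ t₀ := hsS.1.2
  have hys : 0 ≤ y s := hsS.2
  have hslt : s < t₀ := by
    rcases lt_or_eq_of_le hst₀ with h' | h'
    · exact h'
    · rw [h'] at hys; linarith
  have hneg : ∀ x ∈ Set.Ioc s t₀, y x < 0 := by
    intro x hx
    by_contra hge; push_neg at hge
    have hxS : x ∈ S := ⟨⟨le_trans hsS.1.1 hx.1.le, hx.2⟩, hge⟩
    exact absurd (le_csSup hbdd hxS) (not_le.mpr hx.1)
  have hmono : StrictMonoOn y (Set.Icc s t₀) := by
    apply strictMonoOn_of_deriv_pos (convex_Icc _ _) hcont.continuousOn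
    intro x hx
    rw [interior_Icc] at hx
    have hyx : y x < 0 := hneg x ⟨hx.1, hx.2.le⟩
    have hαx : α (y x) < 0 := by rw [← hα_zero]; exact hα_mono hyx
    rw [(hy x).deriv]
    linarith [hineq x]
  have := hmono (Set.left_mem_Icc.mpr hst₀) (Set.right_mem_Icc.mpr hst₀) hslt
  linarith
end
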